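/- Consider the scalar neutral delay differential equation μ ẍ(t) + m ẍ(t−τ) + c ẋ(t) + k x(t) = 0 with μ, m, c, k, τ > 0. If m > μ, then the trivial solution is unstable for every τ > 0; specifically, the characteristic equation μλ² + mλ²e^{−λτ} + cλ + k = 0 has a sequence of roots λ_n with Re(λ_n) → (1/τ)·log(m/μ) > 0, so infinitely many roots have positive real part. -/

import Mathlib

open Filter Topology
open scoped NNReal

/-- Characteristic function of the scalar neutral delay equation
    μ ẍ(t) + m ẍ(t−τ) + c ẋ(t) + k x(t) = 0. -/
noncomputable def Dndde (μ m c k τ : ℝ) (lam : ℂ) : ℂ :=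
  (μ : ℂ) * lam ^ 2 + (m : ℂ) * lam ^ 2 * Complex.exp (-lam * τ)
    + (c : ℂ) * lam + (k : ℂ)

lemma logLipAux {a : ℝ} (ha : 0 < a) {z w : ℂ}
    (hz : z ∈ Metric.closedBall (a : ℂ) (a/2))
    (hw : w ∈ Metric.closedBall (a : ℂ) (a/2)) :
    ‖Complex.log z - Complex.log w‖ ≤ (2/a) * ‖z - w‖ := by
  have key : ∀ x : ℂ, x ∈ Metric.closedBall (a : ℂ) (a/2) → a/2 ≤ x.re ∧ a/2 ≤ ‖x‖ := by
    intro x hx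
    rw [Metric.mem_closedBall, dist_eq_norm] at hx
    have h1 : |(x - a).re| ≤ ‖x - a‖ := by
      simpa using Complex.abs_re_le_norm (x - a)
    have h2 : (x - a).re = x.re - a := by simp
    have hre : a/2 ≤ x.re := by
      rw [h2] at h1
      have := abs_le.mp (h1.trans hx)
      linarith [this.1]
    exact ⟨hre, hre.trans (by simpa using Complex.re_le_norm x)⟩
  have hder : ∀ x ∈ Metric.closedBall (a : ℂ) (a/2),
      HasFDerivWithinAt Complex.log
        (ContinuousLinearMap.smulRight (1 : ℂ →L[ℂ] ℂ) x⁻¹)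
        (Metric.closedBall (a : ℂ) (a/2)) x := by
    intro x hx
    have hslit : x ∈ Complex.slitPlane := Or.inl (by linarith [(key x hx).1])
    exact (Complex.hasDerivAt_log hslit).hasFDerivAt.hasFDerivWithinAt
  have hbound : ∀ x ∈ Metric.closedBall (a : ℂ) (a/2),
      ‖ContinuousLinearMap.smulRight (1 : ℂ →L[ℂ] ℂ) x⁻¹‖ ≤ 2/a := by
    intro x hx
    rw [ContinuousLinearMap.norm_smulRight_apply, norm_one, one_mul, norm_inv]
    have h2 := (key x hx).2
    have hxpos : 0 < ‖x‖ := lt_of_lt_of_le (by positivity) h2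
    rw [inv_le_comm₀ hxpos (by positivity)]
    rw [inv_div]
    exact h2
  exact (convex_closedBall _ _).norm_image_sub_le_of_norm_hasFDerivWithin_le hder hbound hw hz

set_option maxHeartbeats 1000000 in
lemma exists_root_aux (μ m c k τ : ℝ) (hμ : 0 < μ) (hm : 0 < m) (hc : 0 < c)
    (hk : 0 < k) (hτ : 0 < τ) (hmμ : μ < m) (ν : ℕ)
    (hβ : 1 + 2*(c+k)/(m*(μ/m)) + 4*(c+2*k)/((μ/m)*m*τ)
          + (2*(c+k)/((μ/m)*m*τ))/(Real.pi/(2*τ)) + Real.pi/(2*τ)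
          ≤ (2*(ν:ℝ)+1)*Real.pi/τ) :
    ∃ lam : ℂ, Dndde μ m c k τ lam = 0 ∧
      ‖lam - ((((1/τ)*Real.log (m/μ) : ℝ) : ℂ)
          + (((2*(ν:ℝ)+1)*Real.pi/τ : ℝ) : ℂ)*Complex.I)‖
        ≤ (2*(c+k)/((μ/m)*m*τ)) / ((2*(ν:ℝ)+1)*Real.pi/τ - Real.pi/(2*τ)) ∧
      ‖lam - ((((1/τ)*Real.log (m/μ) : ℝ) : ℂ)
          + (((2*(ν:ℝ)+1)*Real.pi/τ : ℝ) : ℂ)*Complex.I)‖ ≤ Real.pi/(2*τ) := by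
  have hπ := Real.pi_pos
  set α : ℝ := μ/m with hαdef
  have hα : 0 < α := div_pos hμ hm
  set ρ : ℝ := Real.pi/(2*τ) with hρdef
  have hρ : 0 < ρ := by positivity
  set β : ℝ := (2*(ν:ℝ)+1)*Real.pi/τ with hβdef
  set Cst : ℝ := 2*(c+k)/(α*m*τ) with hCdef
  have hCst : 0 < Cst := by positivity
  set Rstar : ℝ := 1 + 2*(c+k)/(m*α) + 4*(c+2*k)/(α*m*τ) + Cst/ρ with hRsdef
  have hRs1 : 1 ≤ Rstar := by
    have : 0 ≤ 2*(c+k)/(m*α) := by positivity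
    have : 0 ≤ 4*(c+2*k)/(α*m*τ) := by positivity
    have : 0 ≤ Cst/ρ := by positivity
    simp only [hRsdef]; linarith
  have hRspos : 0 < Rstar := lt_of_lt_of_le one_pos hRs1
  set R : ℝ := β - ρ with hRdef
  have hRRs : Rstar ≤ R := by rw [hRdef]; linarith [hβ]
  have hR1 : 1 ≤ R := hRs1.trans hRRs
  have hRpos : 0 < R := lt_of_lt_of_le one_pos hR1
  set L : ℝ := (1/τ)*Real.log (m/μ) with hLdef
  set ctr : ℂ := ((L : ℝ) : ℂ) + ((β : ℝ) : ℂ)*Complex.I with hctrdef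
  set B : Set ℂ := Metric.closedBall ctr ρ with hBdef
  set S : Set ℂ := Metric.closedBall ((α : ℝ) : ℂ) (α/2) with hSdef
  set h : ℂ → ℂ := fun z => ((α : ℝ) : ℂ) + ((c/m : ℝ) : ℂ)*z⁻¹
      + ((k/m : ℝ) : ℂ)*(z^2)⁻¹ with hhdef
  -- lower bound on |z| for z ∈ B
  have fR : ∀ x ∈ B, R ≤ ‖x‖ := by
    intro x hx
    rw [hBdef, Metric.mem_closedBall, dist_eq_norm] at hx
    have him : |(x - ctr).im| ≤ ‖x - ctr‖ := by
      simpa using Complex.abs_im_le_norm (x - ctr)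
    have hctrim : ctr.im = β := by simp [hctrdef]
    have h2 : (x - ctr).im = x.im - β := by simp [hctrim]
    rw [h2] at him
    have h3 : β - ρ ≤ x.im := by
      have := abs_le.mp (him.trans hx)
      linarith [this.1]
    have h4 : |x.im| ≤ ‖x‖ := by simpa using Complex.abs_im_le_norm x
    have h5 : x.im ≤ |x.im| := le_abs_self _
    simp only [hRdef]; linarith
  have fR0 : ∀ x ∈ B, x ≠ 0 := by
    intro x hx h0
    have := fR x hx
    rw [h0] at this; simp at this; linarith
  -- h maps B into S, with quantitative bound
  have fS : ∀ x ∈ B, ‖h x - ((α : ℝ) : ℂ)‖ ≤ (c+k)/(m*R) := by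
    intro x hx
    have hxR := fR x hx
    have hxpos : (0:ℝ) < ‖x‖ := lt_of_lt_of_le hRpos hxR
    have e1 : h x - ((α : ℝ) : ℂ) = ((c/m : ℝ) : ℂ)*x⁻¹ + ((k/m : ℝ) : ℂ)*(x^2)⁻¹ := by
      simp [hhdef]; ring
    rw [e1]
    have e2 : ‖((c/m : ℝ) : ℂ)*x⁻¹ + ((k/m : ℝ) : ℂ)*(x^2)⁻¹‖
        ≤ (c/m)*‖x‖⁻¹ + (k/m)*(‖x‖^2)⁻¹ := by
      refine (norm_add_le _ _).trans ?_
      have b1 : ‖((c/m : ℝ) : ℂ)*x⁻¹‖ = (c/m)*‖x‖⁻¹ := by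
        rw [norm_mul, norm_inv, Complex.norm_real, Real.norm_eq_abs,
          abs_of_pos (by positivity)]
      have b2 : ‖((k/m : ℝ) : ℂ)*(x^2)⁻¹‖ = (k/m)*(‖x‖^2)⁻¹ := by
        rw [norm_mul, norm_inv, norm_pow, Complex.norm_real, Real.norm_eq_abs,
          abs_of_pos (by positivity)]
      rw [b1, b2]
    refine e2.trans ?_
    have b3 : (c/m)*‖x‖⁻¹ ≤ (c/m)*R⁻¹ := by gcongr
    have b4 : (k/m)*(‖x‖^2)⁻¹ ≤ (k/m)*R⁻¹ := by
      have hx2 : R ≤ ‖x‖^2 := by nlinarith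
      exact mul_le_mul_of_nonneg_left (inv_anti₀ hRpos hx2) (by positivity)
    have : (c/m)*R⁻¹ + (k/m)*R⁻¹ = (c+k)/(m*R) := by field_simp
    linarith
  have fS' : ∀ x ∈ B, h x ∈ S := by
    intro x hx
    rw [hSdef, Metric.mem_closedBall, dist_eq_norm]
    refine (fS x hx).trans ?_
    -- (c+k)/(m*R) ≤ α/2  since  Rstar ≥ 2(c+k)/(m α)
    rw [div_le_div_iff₀ (by positivity) (by norm_num)]
    have h1 : 2*(c+k)/(m*α) ≤ Rstar := by
      have : 0 ≤ Cst/ρ := by positivity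
      have : 0 ≤ 4*(c+2*k)/(α*m*τ) := by positivity
      simp only [hRsdef]; linarith
    have h2 : 2*(c+k) ≤ m*α*Rstar := by
      rw [div_le_iff₀ (by positivity)] at h1; linarith
    nlinarith [mul_pos hm hα, hRRs, mul_le_mul_of_nonneg_left hRRs (le_of_lt (mul_pos hm hα))]
  -- Lipschitz bound for h on B
  set κ : ℝ := (c+2*k)/(m*Rstar) with hκdef
  have hDnorm : ∀ x : ℂ, x ≠ 0 → Rstar ≤ ‖x‖ →
      ‖((c/m:ℝ):ℂ) * (-(x^2)⁻¹) + ((k/m:ℝ):ℂ) * (-((2:ℂ) * x^(2-1)) / ((x^2)^2))‖ ≤ κ := by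
    intro x hx0 hxr
    have hr0 : 0 < ‖x‖ := lt_of_lt_of_le hRspos hxr
    have e1 : ‖((c/m:ℝ):ℂ) * (-(x^2)⁻¹)‖ = (c/m) * (‖x‖^2)⁻¹ := by
      rw [norm_mul, norm_neg, norm_inv, norm_pow, Complex.norm_real, Real.norm_eq_abs,
        abs_of_pos (by positivity)]
    have e2' : ((k/m:ℝ):ℂ) * (-((2:ℂ) * x^(2-1)) / ((x^2)^2)) = -(((k/m:ℝ):ℂ) * 2 * (x^3)⁻¹) := by
      have hxx : (x : ℂ)/x^4 = (x^3)⁻¹ := by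
        rw [show (x:ℂ)^4 = x * x^3 from by ring, div_mul_eq_div_div, div_self hx0, one_div]
      calc ((k/m:ℝ):ℂ) * (-((2:ℂ) * x^(2-1)) / ((x^2)^2))
          = ((k/m:ℝ):ℂ) * (-(2 * (x/x^4))) := by ring
        _ = -(((k/m:ℝ):ℂ) * 2 * (x^3)⁻¹) := by rw [hxx]; ring
    have e2 : ‖((k/m:ℝ):ℂ) * (-((2:ℂ) * x^(2-1)) / ((x^2)^2))‖ = (k/m) * 2 * (‖x‖^3)⁻¹ := by
      rw [e2', norm_neg, norm_mul, norm_mul, norm_inv, norm_pow, Complex.norm_real,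
        Real.norm_eq_abs, abs_of_pos (by positivity)]
      norm_num
    have hr1 : 1 ≤ ‖x‖ := le_trans hRs1 hxr
    have i2 : (‖x‖^2)⁻¹ ≤ Rstar⁻¹ := by
      apply inv_anti₀ hRspos
      calc Rstar ≤ ‖x‖ := hxr
        _ = ‖x‖^1 := (pow_one _).symm
        _ ≤ ‖x‖^2 := pow_le_pow_right₀ hr1 one_le_two
    have i3 : (‖x‖^3)⁻¹ ≤ Rstar⁻¹ := by
      apply inv_anti₀ hRspos
      calc Rstar ≤ ‖x‖ := hxr
        _ = ‖x‖^1 := (pow_one _).symm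
        _ ≤ ‖x‖^3 := pow_le_pow_right₀ hr1 (by norm_num)
    refine (norm_add_le _ _).trans ?_
    rw [e1, e2]
    have : (c/m)*Rstar⁻¹ + (k/m)*2*Rstar⁻¹ = κ := by
      rw [hκdef]; field_simp
    have b1 : (c/m) * (‖x‖^2)⁻¹ ≤ (c/m) * Rstar⁻¹ :=
      mul_le_mul_of_nonneg_left i2 (by positivity)
    have b2 : (k/m) * 2 * (‖x‖^3)⁻¹ ≤ (k/m) * 2 * Rstar⁻¹ :=
      mul_le_mul_of_nonneg_left i3 (by positivity)
    linarith
  have hlip : ∀ x ∈ B, ∀ y ∈ B, ‖h x - h y‖ ≤ κ * ‖x - y‖ := by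
    have hder : ∀ x ∈ B, HasFDerivWithinAt h
        (ContinuousLinearMap.smulRight (1 : ℂ →L[ℂ] ℂ)
          (((c/m : ℝ) : ℂ) * (-(x^2)⁻¹)
            + ((k/m : ℝ) : ℂ) * (-((2:ℂ) * x^(2-1)) / ((x^2)^2)))) B x := by
      intro x hx
      have hx0 := fR0 x hx
      have h1 : HasDerivAt (fun z : ℂ => z⁻¹) (-(x^2)⁻¹) x := hasDerivAt_inv hx0
      have h2 : HasDerivAt (fun z : ℂ => (z^2)⁻¹) (-((2:ℂ) * x^(2-1)) / ((x^2)^2)) x := by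
        have := (hasDerivAt_pow 2 x).inv (pow_ne_zero 2 hx0)
        rw [Nat.cast_ofNat] at this
        exact this
      have h3 : HasDerivAt h (((c/m : ℝ) : ℂ) * (-(x^2)⁻¹)
          + ((k/m : ℝ) : ℂ) * (-((2:ℂ) * x^(2-1)) / ((x^2)^2))) x := by
        rw [hhdef]
        exact ((h1.const_mul ((c/m : ℝ) : ℂ)).const_add (((α : ℝ) : ℂ))).add
          (h2.const_mul ((k/m : ℝ) : ℂ))
      exact h3.hasFDerivAt.hasFDerivWithinAt
    intro x hx y hy
    refine (convex_closedBall _ _).norm_image_sub_le_of_norm_hasFDerivWithin_le hder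
      (fun z hz => ?_) hy hx
    rw [ContinuousLinearMap.norm_smulRight_apply, norm_one, one_mul]
    exact hDnorm z (fR0 z hz) (hRRs.trans (fR z hz))
  -- the map T
  set n' : ℕ := 2*ν + 1 with hn'def
  set T : ℂ → ℂ := fun z =>
    (((n' : ℕ) : ℂ) * ((Real.pi : ℂ) * Complex.I) - Complex.log (h z)) / (τ : ℂ) with hTdef
  have hτC : (τ : ℂ) ≠ 0 := by exact_mod_cast hτ.ne'
  have hlogα : Complex.log ((α : ℝ) : ℂ) = ((-(τ*L) : ℝ) : ℂ) := by
    rw [← Complex.ofReal_log hα.le]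
    norm_cast
    rw [hLdef, show α = (m/μ)⁻¹ by rw [hαdef, inv_div], Real.log_inv]
    field_simp
  have hβτC : ((β:ℝ):ℂ) * (τ:ℂ) = ((n' : ℕ):ℂ) * ((Real.pi:ℝ):ℂ) := by
    have hβτR : β * τ = (n' : ℝ) * Real.pi := by
      rw [hβdef, hn'def]; push_cast; field_simp
    exact_mod_cast congrArg Complex.ofReal hβτR
  have hcenter : ∀ z : ℂ, T z - ctr
      = (Complex.log ((α:ℝ):ℂ) - Complex.log (h z)) / (τ:ℂ) := by
    intro z
    rw [hTdef, hctrdef, hlogα]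
    push_cast
    have hn'C : ((n':ℕ):ℂ) = 2*(ν:ℂ)+1 := by rw [hn'def]; push_cast; ring
    field_simp
    linear_combination (-Complex.I) * hβτC
  have hτn : ‖(τ:ℂ)‖ = τ := by
    rw [Complex.norm_real, Real.norm_eq_abs, abs_of_pos hτ]
  have hαS : ((α:ℝ):ℂ) ∈ S := by
    rw [hSdef]; exact Metric.mem_closedBall_self (by positivity)
  have hself : ∀ z ∈ B, ‖T z - ctr‖ ≤ Cst / R := by
    intro z hz
    rw [hcenter z, norm_div, hτn]
    have hlog := logLipAux hα hαS (fS' z hz)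
    have h2 : ‖((α:ℝ):ℂ) - h z‖ = ‖h z - ((α:ℝ):ℂ)‖ := norm_sub_rev _ _
    have h3 : ‖Complex.log ((α:ℝ):ℂ) - Complex.log (h z)‖ ≤ (2/α) * ((c+k)/(m*R)) := by
      refine hlog.trans ?_
      rw [h2]
      exact mul_le_mul_of_nonneg_left (fS z hz) (by positivity)
    have h4 : (2/α) * ((c+k)/(m*R)) / τ = Cst / R := by
      rw [hCdef]; field_simp
    calc ‖Complex.log ((α:ℝ):ℂ) - Complex.log (h z)‖ / τ
        ≤ ((2/α) * ((c+k)/(m*R))) / τ := by gcongr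
      _ = Cst / R := h4
  have hCR : Cst / R ≤ ρ := by
    have h1 : Cst/ρ ≤ R := by
      refine le_trans ?_ hRRs
      have : 0 ≤ 2*(c+k)/(m*α) := by positivity
      have : 0 ≤ 4*(c+2*k)/(α*m*τ) := by positivity
      rw [hRsdef]; linarith
    have h2 : Cst ≤ R * ρ := by rw [div_le_iff₀ hρ] at h1; linarith
    rw [div_le_iff₀ hRpos]; linarith
  have hmaps : Set.MapsTo T B B := by
    intro z hz
    rw [hBdef, Metric.mem_closedBall, dist_eq_norm]
    exact (hself z hz).trans hCR
  have hC2 : (2/α)*κ/τ ≤ 1/2 := by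
    have h1 : 4*(c+2*k)/(α*m*τ) ≤ Rstar := by
      have : 0 ≤ 2*(c+k)/(m*α) := by positivity
      have : 0 ≤ Cst/ρ := by positivity
      rw [hRsdef]; linarith
    have h2 : 4*(c+2*k) ≤ α*m*τ*Rstar := by
      rw [div_le_iff₀ (by positivity)] at h1; linarith
    have h3 : (2/α)*κ/τ = (2*(c+2*k))/(α*(m*Rstar)*τ) := by
      rw [hκdef]; field_simp
    rw [h3, div_le_div_iff₀ (by positivity) (by norm_num)]
    nlinarith
  have hlipT : LipschitzOnWith (1/2 : ℝ≥0) T B := by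
    apply LipschitzOnWith.of_dist_le_mul
    intro x hx y hy
    rw [dist_eq_norm, dist_eq_norm]
    have e : T x - T y = (Complex.log (h y) - Complex.log (h x)) / (τ:ℂ) := by
      rw [hTdef]; field_simp; ring
    rw [e, norm_div, hτn]
    have hlog := logLipAux hα (fS' y hy) (fS' x hx)
    have hhl := hlip y hy x hx
    have hxy : ‖y - x‖ = ‖x - y‖ := norm_sub_rev _ _
    have hco : ((1/2 : ℝ≥0) : ℝ) = 1/2 := by norm_num
    rw [hco]
    have h5 : ‖Complex.log (h y) - Complex.log (h x)‖ ≤ (2/α) * (κ * ‖x - y‖) := by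
      refine hlog.trans ?_
      rw [← hxy]
      exact mul_le_mul_of_nonneg_left hhl (by positivity)
    calc ‖Complex.log (h y) - Complex.log (h x)‖ / τ
        ≤ ((2/α) * (κ * ‖x - y‖)) / τ := by gcongr
      _ = ((2/α)*κ/τ) * ‖x - y‖ := by ring
      _ ≤ (1/2) * ‖x - y‖ := mul_le_mul_of_nonneg_right hC2 (norm_nonneg _)
  have hcomplete : IsComplete B := (Metric.isClosed_closedBall).isComplete
  have hcontr : ContractingWith (1/2 : ℝ≥0) (hmaps.restrict T B B) :=
    ⟨by exact_mod_cast (by norm_num : (1/2:ℝ) < 1), hlipT.mapsToRestrict hmaps⟩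
  obtain ⟨lam, hlamB, hfix, -, -⟩ :=
    hcontr.exists_fixedPoint' hcomplete hmaps (Metric.mem_closedBall_self hρ.le)
      (edist_ne_top _ _)
  have hTeq : T lam = lam := hfix
  have hlam0 : lam ≠ 0 := fR0 lam hlamB
  have hhne : h lam ≠ 0 := by
    intro h0
    have := fS' lam hlamB
    rw [hSdef, Metric.mem_closedBall, h0, dist_zero_left, Complex.norm_real,
      Real.norm_eq_abs, abs_of_pos hα] at this
    linarith
  have hexp : Complex.exp (-lam * (τ:ℂ)) = - h lam := by
    have h1 : -lam * (τ:ℂ) = Complex.log (h lam)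
        - ((n':ℕ):ℂ) * ((Real.pi:ℂ) * Complex.I) := by
      have h0 := hTeq
      rw [hTdef] at h0
      field_simp at h0
      linear_combination h0
    rw [h1, Complex.exp_sub, Complex.exp_log hhne, Complex.exp_nat_mul, Complex.exp_pi_mul_I,
      hn'def]
    rw [Odd.neg_one_pow ⟨ν, by ring⟩]
    ring
  refine ⟨lam, ?_, ?_, ?_⟩
  · show Dndde μ m c k τ lam = 0
    unfold Dndde
    rw [show -lam * (τ:ℂ) = -lam * ((τ:ℝ):ℂ) from rfl, hexp, hhdef, hαdef]
    push_cast
    have hmC : (m:ℂ) ≠ 0 := by exact_mod_cast hm.ne'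
    field_simp
    ring
  · calc ‖lam - ctr‖ = ‖T lam - ctr‖ := by rw [hTeq]
      _ ≤ Cst / R := hself lam hlamB
  · calc ‖lam - ctr‖ = ‖T lam - ctr‖ := by rw [hTeq]
      _ ≤ Cst / R := hself lam hlamB
      _ ≤ ρ := hCR

theorem stmt_4 (μ m c k τ : ℝ) (hμ : 0 < μ) (hm : 0 < m) (hc : 0 < c)
    (hk : 0 < k) (hτ : 0 < τ) (hmμ : μ < m) :
    0 < (1 / τ) * Real.log (m / μ) ∧
    (∃ lamseq : ℕ → ℂ, Function.Injective lamseq ∧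
      (∀ n, Dndde μ m c k τ (lamseq n) = 0) ∧
      Tendsto (fun n => (lamseq n).re) atTop (𝓝 ((1 / τ) * Real.log (m / μ)))) ∧
    {lam : ℂ | Dndde μ m c k τ lam = 0 ∧ 0 < lam.re}.Infinite := by
  have hπ := Real.pi_pos
  have hL : 0 < (1/τ) * Real.log (m/μ) :=
    mul_pos (by positivity) (Real.log_pos ((one_lt_div hμ).mpr hmμ))
  have hρ : 0 < Real.pi/(2*τ) := by positivity
  obtain ⟨N, hN⟩ : ∃ N : ℕ, ∀ n : ℕ,
      1 + 2*(c+k)/(m*(μ/m)) + 4*(c+2*k)/((μ/m)*m*τ)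
        + (2*(c+k)/((μ/m)*m*τ))/(Real.pi/(2*τ)) + Real.pi/(2*τ)
        ≤ (2*(((n+N : ℕ)):ℝ)+1)*Real.pi/τ := by
    set W : ℝ := 1 + 2*(c+k)/(m*(μ/m)) + 4*(c+2*k)/((μ/m)*m*τ)
        + (2*(c+k)/((μ/m)*m*τ))/(Real.pi/(2*τ)) + Real.pi/(2*τ) with hWdef
    refine ⟨⌈W*τ/(2*Real.pi)⌉₊, fun n => ?_⟩
    have h1 : W*τ/(2*Real.pi) ≤ (⌈W*τ/(2*Real.pi)⌉₊ : ℝ) := Nat.le_ceil _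
    have h3 : W*τ ≤ 2*Real.pi*(⌈W*τ/(2*Real.pi)⌉₊ : ℝ) := by
      rw [div_le_iff₀ (by positivity)] at h1; linarith
    rw [le_div_iff₀ hτ]
    push_cast
    nlinarith [hπ, Nat.cast_nonneg (α := ℝ) n, Nat.cast_nonneg (α := ℝ) ⌈W*τ/(2*Real.pi)⌉₊]
  have hex : ∀ n : ℕ, ∃ lam : ℂ, Dndde μ m c k τ lam = 0 ∧
      ‖lam - ((((1/τ)*Real.log (m/μ) : ℝ) : ℂ)
          + (((2*(((n+N:ℕ)):ℝ)+1)*Real.pi/τ : ℝ) : ℂ)*Complex.I)‖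
        ≤ (2*(c+k)/((μ/m)*m*τ)) / ((2*(((n+N:ℕ)):ℝ)+1)*Real.pi/τ - Real.pi/(2*τ)) ∧
      ‖lam - ((((1/τ)*Real.log (m/μ) : ℝ) : ℂ)
          + (((2*(((n+N:ℕ)):ℝ)+1)*Real.pi/τ : ℝ) : ℂ)*Complex.I)‖ ≤ Real.pi/(2*τ) :=
    fun n => exists_root_aux μ m c k τ hμ hm hc hk hτ hmμ (n+N) (hN n)
  choose lseq h0 h1 h2 using hex
  -- imaginary part bounds
  have him : ∀ n : ℕ, |(lseq n).im - (2*(((n+N:ℕ)):ℝ)+1)*Real.pi/τ| ≤ Real.pi/(2*τ) := by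
    intro n
    have := h2 n
    have e : (lseq n - ((((1/τ)*Real.log (m/μ) : ℝ) : ℂ)
        + (((2*(((n+N:ℕ)):ℝ)+1)*Real.pi/τ : ℝ) : ℂ)*Complex.I)).im
        = (lseq n).im - (2*(((n+N:ℕ)):ℝ)+1)*Real.pi/τ := by simp
    calc |(lseq n).im - (2*(((n+N:ℕ)):ℝ)+1)*Real.pi/τ|
        = |(lseq n - ((((1/τ)*Real.log (m/μ) : ℝ) : ℂ)
          + (((2*(((n+N:ℕ)):ℝ)+1)*Real.pi/τ : ℝ) : ℂ)*Complex.I)).im| := by rw [e]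
      _ ≤ ‖lseq n - ((((1/τ)*Real.log (m/μ) : ℝ) : ℂ)
          + (((2*(((n+N:ℕ)):ℝ)+1)*Real.pi/τ : ℝ) : ℂ)*Complex.I)‖ := by
            exact Complex.abs_im_le_norm _
      _ ≤ Real.pi/(2*τ) := this
  have hsm : StrictMono fun n => (lseq n).im := by
    apply strictMono_nat_of_lt_succ
    intro n
    have a1 := abs_le.mp (him n)
    have a2 := abs_le.mp (him (n+1))
    have e1 : (2*(((n+1+N:ℕ)):ℝ)+1)*Real.pi/τ
        = (2*(((n+N:ℕ)):ℝ)+1)*Real.pi/τ + 2*Real.pi/τ := by push_cast; ring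
    have e2 : 2*Real.pi/τ = 4*(Real.pi/(2*τ)) := by field_simp; ring
    rw [e1, e2] at a2
    linarith [a1.2, a2.1]
  have hinj : Function.Injective lseq := fun a b hab => hsm.injective (by rw [hab])
  -- convergence of real parts
  have hbtop : Tendsto (fun n : ℕ => (2*(((n+N:ℕ)):ℝ)+1)*Real.pi/τ - Real.pi/(2*τ))
      atTop atTop := by
    have hb1 : Tendsto (fun n : ℕ => (2*Real.pi/τ)*(n:ℝ)
        + ((2*(N:ℝ)+1)*Real.pi/τ - Real.pi/(2*τ))) atTop atTop :=
      tendsto_atTop_add_const_right _ _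
        (tendsto_natCast_atTop_atTop.const_mul_atTop (by positivity))
    refine hb1.congr fun n => ?_
    push_cast
    ring
  have hg : Tendsto (fun n : ℕ => (2*(c+k)/((μ/m)*m*τ))
      / ((2*(((n+N:ℕ)):ℝ)+1)*Real.pi/τ - Real.pi/(2*τ))) atTop (𝓝 0) :=
    tendsto_const_nhds.div_atTop hbtop
  have hre0 : Tendsto (fun n : ℕ => (lseq n).re - (1/τ)*Real.log (m/μ)) atTop (𝓝 0) := by
    apply squeeze_zero_norm _ hg
    intro n
    have e : ((lseq n) - ((((1/τ)*Real.log (m/μ) : ℝ) : ℂ)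
        + (((2*(((n+N:ℕ)):ℝ)+1)*Real.pi/τ : ℝ) : ℂ)*Complex.I)).re
        = (lseq n).re - (1/τ)*Real.log (m/μ) := by simp
    rw [Real.norm_eq_abs, ← e]
    refine le_trans ?_ (h1 n)
    exact Complex.abs_re_le_norm _
  have hre : Tendsto (fun n : ℕ => (lseq n).re) atTop (𝓝 ((1/τ)*Real.log (m/μ))) := by
    have := hre0.add_const ((1/τ)*Real.log (m/μ))
    simpa using this
  refine ⟨hL, ⟨lseq, hinj, h0, hre⟩, ?_⟩
  have hev : ∀ᶠ n : ℕ in atTop, 0 < (lseq n).re := hre.eventually (eventually_gt_nhds hL)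
  obtain ⟨M, hM⟩ := eventually_atTop.mp hev
  apply Set.infinite_of_injective_forall_mem
    (f := fun n : ℕ => lseq (n + M))
  · intro a b hab
    have : a + M = b + M := hinj hab
    omega
  · intro n
    exact ⟨h0 _, hM _ (Nat.le_add_left M n)⟩
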